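/- arXiv:1501.03284 — 3 statements merged into one kernel-verified Lean document; each statement's English description precedes it below -/
import Mathlib

section
/- Let F be a fraction of D with counting vector Y and coefficients c_α. For each i = 1,...,m, define H_i = Σ_{‖α‖_0 = i} Re(H^α), summing over all α ∈ L with exactly i nonzero components. Then Σ_{‖α‖_0 = i} |c_α|² = (1/(#D)²)·Yᵀ H_i Y, and hence the i-th component of the generalized wordlength pattern satisfies α_i(F) = (1/(#F)²)·Yᵀ H_i Y. -/
open Finset

/-- The monomial function `X^α` on the full factorial design, identifying the point of
`D_1 × ⋯ × D_m` with exponents `ζ ∈ Z_{n_1} × ⋯ × Z_{n_m}` with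
`(exp(2πi ζ_1/n_1), …, exp(2πi ζ_m/n_m))`: `X^α(ζ) = ζ_1^{α_1} ⋯ ζ_m^{α_m}`. -/
noncomputable def Xmon {m : ℕ} (n : Fin m → ℕ) (α ζ : ∀ j, ZMod (n j)) : ℂ :=
  ∏ j, Complex.exp (2 * Real.pi * Complex.I *
    (((α j).val : ℂ) * ((ζ j).val : ℂ)) / (n j))

/-- The matrix `H^α` with entries `H^α_{ζτ} = conj(X^α(ζ))·X^α(τ)`. -/
noncomputable def Hmat {m : ℕ} (n : Fin m → ℕ) (α : ∀ j, ZMod (n j)) :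
    Matrix (∀ j, ZMod (n j)) (∀ j, ZMod (n j)) ℂ :=
  Matrix.of fun ζ τ => (starRingEnd ℂ) (Xmon n α ζ) * Xmon n α τ

/-- The number of nonzero components of `α` (the "word length" `‖α‖₀`). -/
def wt {m : ℕ} (n : Fin m → ℕ) (α : ∀ j, ZMod (n j)) : ℕ :=
  (Finset.univ.filter fun j => α j ≠ 0).card

/-!
`|c_α|² = c_α · conj(c_α)` expands into the Hermitian form of the Gram matrix
`H^α = (conj(X^α(ζ)) X^α(τ))_{ζτ}` evaluated at the real vector `Y`, so only its real part
contributes; summing over `‖α‖₀ = i` gives the first identity. Since `X^0 ≡ 1`, `c_0 = #F/#D`,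
and dividing by `|c_0|²` turns the factor `1/(#D)²` into `1/(#F)²`.
-/

open ComplexConjugate

theorem norm_sq_sum_ofReal_mul_conj {ι : Type*} [Fintype ι] (y : ι → ℝ) (x : ι → ℂ) :
    ‖∑ ζ, (y ζ : ℂ) * conj (x ζ)‖ ^ 2 = ∑ ζ, ∑ τ, y ζ * (conj (x ζ) * x τ).re * y τ := by
  have hprod : (∑ ζ, (y ζ : ℂ) * conj (x ζ)) * conj (∑ τ, (y τ : ℂ) * conj (x τ)) =
      ∑ ζ, ∑ τ, (y ζ : ℂ) * (conj (x ζ) * x τ) * (y τ : ℂ) := by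
    simp only [map_sum, map_mul, Complex.conj_ofReal, Complex.conj_conj, sum_mul_sum]
    exact sum_congr rfl fun ζ _ => sum_congr rfl fun τ _ => by ring
  rw [← Complex.normSq_eq_norm_sq, ← Complex.ofReal_re (Complex.normSq _), ← Complex.mul_conj,
    hprod, Complex.re_sum]
  exact sum_congr rfl fun ζ _ => by
    rw [Complex.re_sum]
    exact sum_congr rfl fun τ _ => by rw [Complex.re_mul_ofReal, Complex.re_ofReal_mul]

theorem Xmon_zero {m : ℕ} (n : Fin m → ℕ) (ζ : ∀ j, ZMod (n j)) : Xmon n 0 ζ = 1 :=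
  prod_eq_one fun j _ => by simp

noncomputable def fractionCoeff {m : ℕ} (n : Fin m → ℕ) [∀ j, NeZero (n j)]
    (Y : (∀ j, ZMod (n j)) → ℕ) (α : ∀ j, ZMod (n j)) : ℂ :=
  (1 / ∏ j, (n j : ℂ)) * ∑ ζ, (Y ζ : ℂ) * conj (Xmon n α ζ)

section Coefficients

variable {m : ℕ} {n : Fin m → ℕ} [∀ j, NeZero (n j)] (Y : (∀ j, ZMod (n j)) → ℕ)

theorem norm_sq_fractionCoeff (α : ∀ j, ZMod (n j)) :
    ‖fractionCoeff n Y α‖ ^ 2 = (1 / ((∏ j, n j : ℕ) : ℝ)) ^ 2 *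
      ∑ ζ, ∑ τ, (Y ζ : ℝ) * (Hmat n α ζ τ).re * (Y τ : ℝ) := by
  have h := norm_sq_sum_ofReal_mul_conj (fun ζ => (Y ζ : ℝ)) (Xmon n α)
  push_cast at h
  rw [fractionCoeff, norm_mul, mul_pow, h]
  simp [Hmat]

theorem sum_norm_sq_fractionCoeff (S : Finset (∀ j, ZMod (n j))) :
    ∑ α ∈ S, ‖fractionCoeff n Y α‖ ^ 2 = (1 / ((∏ j, n j : ℕ) : ℝ)) ^ 2 *
      ∑ ζ, ∑ τ, (Y ζ : ℝ) * (∑ α ∈ S, (Hmat n α ζ τ).re) * (Y τ : ℝ) := by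
  rw [sum_congr rfl fun α _ => norm_sq_fractionCoeff Y α, ← mul_sum, sum_comm]
  congr 1
  refine sum_congr rfl fun ζ _ => ?_
  rw [sum_comm]
  exact sum_congr rfl fun τ _ => by rw [mul_sum, sum_mul]

theorem fractionCoeff_zero :
    fractionCoeff n Y 0 = (((∑ ζ, Y ζ : ℕ) : ℝ) / ((∏ j, n j : ℕ) : ℝ) : ℝ) := by
  simp only [fractionCoeff, Xmon_zero, map_one, mul_one]
  push_cast
  ring

end Coefficients

theorem stmt_12_general (m : ℕ) (n : Fin m → ℕ) [∀ j, NeZero (n j)]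
    (Y : (∀ j, ZMod (n j)) → ℕ)
    (c : (∀ j, ZMod (n j)) → ℂ)
    (hc : ∀ α, c α = (1 / ∏ j, (n j : ℂ)) *
      ∑ ζ, (Y ζ : ℂ) * (starRingEnd ℂ) (Xmon n α ζ))
    (i : ℕ) :
    ((∑ α ∈ Finset.univ.filter (fun α => wt n α = i), ‖c α‖ ^ 2) =
      (1 / ((∏ j, n j : ℕ) : ℝ) ^ 2) *
        ∑ ζ, ∑ τ, (Y ζ : ℝ) *
          (∑ α ∈ Finset.univ.filter (fun α => wt n α = i), (Hmat n α ζ τ).re) *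
            (Y τ : ℝ)) ∧
    ((∑ α ∈ Finset.univ.filter (fun α => wt n α = i),
        ‖c α‖ ^ 2 / ‖c 0‖ ^ 2) =
      (1 / ((∑ ζ, Y ζ : ℕ) : ℝ) ^ 2) *
        ∑ ζ, ∑ τ, (Y ζ : ℝ) *
          (∑ α ∈ Finset.univ.filter (fun α => wt n α = i), (Hmat n α ζ τ).re) *
            (Y τ : ℝ)) := by
  obtain rfl : c = fractionCoeff n Y := funext hc
  have hsum := sum_norm_sq_fractionCoeff Y (univ.filter fun α => wt n α = i)
  rw [one_div_pow] at hsum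
  refine ⟨hsum, ?_⟩
  have hN : ((∏ j, n j : ℕ) : ℝ) ≠ 0 :=
    Nat.cast_ne_zero.mpr (prod_ne_zero_iff.mpr fun j _ => NeZero.ne (n j))
  rw [← sum_div, hsum, fractionCoeff_zero, Complex.norm_real, norm_div, div_pow]
  simp only [Real.norm_natCast]
  field_simp

/-- With `H_i = ∑_{‖α‖₀ = i} Re(H^α)`, one has
`∑_{‖α‖₀ = i} |c_α|² = (1/(#D)²)·Yᵀ H_i Y`, and hence the `i`-th component of the
generalized wordlength pattern satisfies `α_i(F) = (1/(#F)²)·Yᵀ H_i Y`. -/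
theorem stmt_12 (m : ℕ) (n : Fin m → ℕ) (hn : ∀ j, 1 ≤ n j) [∀ j, NeZero (n j)]
    (Y : (∀ j, ZMod (n j)) → ℕ) (hF : 0 < ∑ ζ, Y ζ)
    (c : (∀ j, ZMod (n j)) → ℂ)
    (hc : ∀ α, c α = (1 / ∏ j, (n j : ℂ)) *
      ∑ ζ, (Y ζ : ℂ) * (starRingEnd ℂ) (Xmon n α ζ))
    (i : ℕ) (hi1 : 1 ≤ i) (hi2 : i ≤ m) :
    ((∑ α ∈ Finset.univ.filter (fun α => wt n α = i), ‖c α‖ ^ 2) =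
      (1 / ((∏ j, n j : ℕ) : ℝ) ^ 2) *
        ∑ ζ, ∑ τ, (Y ζ : ℝ) *
          (∑ α ∈ Finset.univ.filter (fun α => wt n α = i), (Hmat n α ζ τ).re) *
            (Y τ : ℝ)) ∧
    ((∑ α ∈ Finset.univ.filter (fun α => wt n α = i),
        ‖c α‖ ^ 2 / ‖c 0‖ ^ 2) =
      (1 / ((∑ ζ, Y ζ : ℕ) : ℝ) ^ 2) *
        ∑ ζ, ∑ τ, (Y ζ : ℝ) *
          (∑ α ∈ Finset.univ.filter (fun α => wt n α = i), (Hmat n α ζ τ).re) *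
            (Y τ : ℝ)) :=
  stmt_12_general m n Y c hc i
end

section
/- A fraction F with counting function R = Σ_α c_α X^α factorially projects onto the I-factors (i.e., the projection π_I(F) is a multiple full factorial on the factors in I, with each point appearing the same positive number of times) if and only if c_α = 0 for every nonzero α whose support is contained in I (i.e., α_j = 0 for all j ∉ I and α ≠ 0). -/
/-! The monomials `X^α` are the characters of the finite abelian group `∏ j, ZMod (n j)`, and
`#D • c` is the Fourier transform of `R`. For `α` supported on `I`, the character `X^α` factors
through the projection onto the `I`-coordinates, so `#D • c_α` is also the Fourier coefficient
of the projected counting function `R_I` at the restriction of `α`. By Fourier inversion, a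
function on a finite abelian group is constant iff all its nontrivial Fourier coefficients
vanish; and a constant `R_I` is positive because `R` has positive total mass. -/

open Finset

section PiStdAddChar

variable {ι : Type*} [Fintype ι] {n : ι → ℕ} [∀ j, NeZero (n j)]

noncomputable def piStdAddChar (β η : ∀ j, ZMod (n j)) : ℂ :=
  ∏ j, ZMod.stdAddChar (β j * η j)

lemma piStdAddChar_comm (β η : ∀ j, ZMod (n j)) : piStdAddChar β η = piStdAddChar η β := by
  simp only [piStdAddChar, mul_comm]

@[simp]
lemma piStdAddChar_zero_left (η : ∀ j, ZMod (n j)) : piStdAddChar 0 η = 1 := by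
  simp [piStdAddChar]

lemma conj_piStdAddChar_mul (β ξ η : ∀ j, ZMod (n j)) :
    starRingEnd ℂ (piStdAddChar β ξ) * piStdAddChar β η = piStdAddChar β (η - ξ) := by
  simp only [piStdAddChar, map_prod, ← prod_mul_distrib, ← AddChar.map_neg_eq_conj,
    ← AddChar.map_add_eq_mul, Pi.sub_apply, mul_sub, neg_add_eq_sub]

variable [DecidableEq ι]

/-- In the paper's notation `c_α = piFourierCoeff R α / #D`. -/
noncomputable def piFourierCoeff (f : (∀ j, ZMod (n j)) → ℂ) (β : ∀ j, ZMod (n j)) : ℂ :=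
  ∑ ξ, f ξ * starRingEnd ℂ (piStdAddChar β ξ)

lemma sum_piStdAddChar_left (d : ∀ j, ZMod (n j)) :
    ∑ β, piStdAddChar β d = if d = 0 then ∏ j, (n j : ℂ) else 0 := by
  have h1 (j : ι) : ∑ b : ZMod (n j), ZMod.stdAddChar (b * d j) =
      if d j = 0 then (n j : ℂ) else 0 := by
    rw [AddChar.sum_mulShift _ (ZMod.isPrimitive_stdAddChar _), ZMod.card, Nat.cast_ite,
      Nat.cast_zero]
  simp only [piStdAddChar]
  rw [← Fintype.prod_sum fun j (b : ZMod (n j)) ↦ ZMod.stdAddChar (b * d j)]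
  simp only [h1, prod_ite_zero, mem_univ, true_implies, funext_iff, Pi.zero_apply]

lemma sum_piStdAddChar_right (β : ∀ j, ZMod (n j)) :
    ∑ η, piStdAddChar β η = if β = 0 then ∏ j, (n j : ℂ) else 0 := by
  simp only [piStdAddChar_comm β, sum_piStdAddChar_left]

lemma sum_piFourierCoeff_mul_piStdAddChar (f : (∀ j, ZMod (n j)) → ℂ) (η : ∀ j, ZMod (n j)) :
    ∑ β, piFourierCoeff f β * piStdAddChar β η = (∏ j, (n j : ℂ)) * f η := by
  calc ∑ β, piFourierCoeff f β * piStdAddChar β η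
      = ∑ ξ, f ξ * ∑ β, piStdAddChar β (η - ξ) := by
        simp only [piFourierCoeff, sum_mul, mul_sum, mul_assoc, conj_piStdAddChar_mul]
        exact sum_comm
    _ = (∏ j, (n j : ℂ)) * f η := by
        simp only [sum_piStdAddChar_left, sub_eq_zero, mul_ite, mul_zero, sum_ite_eq,
          mem_univ, if_true, mul_comm]

lemma piFourierCoeff_const (a : ℂ) {β : ∀ j, ZMod (n j)} (hβ : β ≠ 0) :
    piFourierCoeff (fun _ ↦ a) β = 0 := by
  rw [piFourierCoeff, ← mul_sum, ← map_sum, sum_piStdAddChar_right, if_neg hβ, map_zero,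
    mul_zero]

theorem forall_eq_apply_zero_iff_piFourierCoeff_eq_zero (f : (∀ j, ZMod (n j)) → ℂ) :
    (∀ η, f η = f 0) ↔ ∀ β ≠ 0, piFourierCoeff f β = 0 := by
  constructor
  · intro hf β hβ
    rw [funext hf]
    exact piFourierCoeff_const _ hβ
  · intro hf η
    have hN : (∏ j, (n j : ℂ)) ≠ 0 := prod_ne_zero_iff.mpr fun j _ ↦ NeZero.ne _
    have hinv (ξ) : (∏ j, (n j : ℂ)) * f ξ = piFourierCoeff f 0 := by
      rw [← sum_piFourierCoeff_mul_piStdAddChar, sum_eq_single 0 (fun β _ hβ ↦ by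
        rw [hf β hβ, zero_mul]) (by simp)]
      simp
    exact mul_left_cancel₀ hN ((hinv η).trans (hinv 0).symm)

end PiStdAddChar

section Projection

variable {ι : Type*} {n : ι → ℕ} (I : Finset ι)

lemma restrict_eq_zero_iff {α : ∀ j, ZMod (n j)} (hα : ∀ j ∉ I, α j = 0) :
    I.restrict α = 0 ↔ α = 0 := by
  refine ⟨fun h ↦ funext fun j ↦ ?_, fun h ↦ h ▸ rfl⟩
  by_cases hj : j ∈ I
  · exact congrFun h ⟨j, hj⟩
  · exact hα j hj

lemma exists_restrict_eq [DecidableEq ι] (β : ∀ j : I, ZMod (n j)) :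
    ∃ α : ∀ j, ZMod (n j), (∀ j ∉ I, α j = 0) ∧ I.restrict α = β :=
  ⟨fun j ↦ if h : j ∈ I then β ⟨j, h⟩ else 0, fun _ hj ↦ dif_neg hj,
    funext fun j ↦ dif_pos j.2⟩

variable [Fintype ι] [∀ j, NeZero (n j)]

lemma piStdAddChar_restrict {α : ∀ j, ZMod (n j)} (hα : ∀ j ∉ I, α j = 0)
    (ζ : ∀ j, ZMod (n j)) :
    piStdAddChar (I.restrict α) (I.restrict ζ) = piStdAddChar α ζ :=
  calc piStdAddChar (I.restrict α) (I.restrict ζ)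
      = ∏ j ∈ I, ZMod.stdAddChar (α j * ζ j) :=
        prod_coe_sort I fun j ↦ ZMod.stdAddChar (α j * ζ j)
    _ = piStdAddChar α ζ := prod_subset (subset_univ I) fun j _ hj ↦ by
        rw [hα j hj, zero_mul, AddChar.map_zero_eq_one]

variable [DecidableEq ι]

/-- The projected counting function `R_I`. -/
def projCount {M : Type*} [AddCommMonoid M] (f : (∀ j, ZMod (n j)) → M)
    (η : ∀ j : I, ZMod (n j)) : M :=
  ∑ ζ ∈ univ.filter (fun ζ ↦ I.restrict ζ = η), f ζ

lemma sum_projCount {M : Type*} [AddCommMonoid M] (f : (∀ j, ZMod (n j)) → M) :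
    ∑ η, projCount I f η = ∑ ζ, f ζ :=
  sum_fiberwise _ _ _

lemma exists_pos_projCount_eq_iff {R : (∀ j, ZMod (n j)) → ℕ} (hR : 0 < ∑ ζ, R ζ) :
    (∃ lam, 0 < lam ∧ ∀ η, projCount I R η = lam) ↔
      ∀ η, projCount I R η = projCount I R 0 := by
  refine ⟨fun ⟨lam, _, h⟩ η ↦ (h η).trans (h 0).symm, fun h ↦ ?_⟩
  refine ⟨projCount I R 0, Nat.pos_of_ne_zero fun h0 ↦ hR.ne' ?_, h⟩
  rw [← sum_projCount I R]
  exact sum_eq_zero fun η _ ↦ (h η).trans h0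

lemma piFourierCoeff_projCount {α : ∀ j, ZMod (n j)} (hα : ∀ j ∉ I, α j = 0)
    (f : (∀ j, ZMod (n j)) → ℂ) :
    piFourierCoeff (projCount I f) (I.restrict α) = piFourierCoeff f α := by
  rw [piFourierCoeff, piFourierCoeff, ← sum_fiberwise univ I.restrict]
  refine sum_congr rfl fun η _ ↦ ?_
  rw [projCount, sum_mul]
  refine sum_congr rfl fun ζ hζ ↦ ?_
  rw [← (mem_filter.mp hζ).2, piStdAddChar_restrict I hα]

end Projection

lemma exp_val_mul_val_eq_stdAddChar {N : ℕ} [NeZero N] (a b : ZMod N) :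
    Complex.exp (2 * Real.pi * Complex.I * ((a.val : ℂ) * (b.val : ℂ)) / N) =
      ZMod.stdAddChar (a * b) := by
  have h : (((a.val * b.val : ℕ) : ℤ) : ZMod N) = a * b := by
    push_cast
    rw [ZMod.natCast_zmod_val, ZMod.natCast_zmod_val]
  rw [← h, ZMod.stdAddChar_coe]
  push_cast
  ring_nf

lemma Xmon_eq_piStdAddChar {m : ℕ} (n : Fin m → ℕ) [∀ j, NeZero (n j)] :
    Xmon n = piStdAddChar := by
  ext α ζ
  exact prod_congr rfl fun j _ ↦ exp_val_mul_val_eq_stdAddChar (α j) (ζ j)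

theorem stmt_15_general (m : ℕ) (n : Fin m → ℕ) [∀ j, NeZero (n j)]
    (I : Finset (Fin m)) (R : (∀ j, ZMod (n j)) → ℕ) (hF : 0 < ∑ ζ, R ζ)
    (c : (∀ j, ZMod (n j)) → ℂ)
    (hc : ∀ α, c α = (1 / ∏ j, (n j : ℂ)) *
      ∑ ζ, (R ζ : ℂ) * (starRingEnd ℂ) (Xmon n α ζ)) :
    (∃ lam : ℕ, 0 < lam ∧ ∀ η : ∀ j : I, ZMod (n j.1),
        (∑ ζ ∈ Finset.univ.filter
          (fun ζ : ∀ j, ZMod (n j) => (fun j : I => ζ j.1) = η), R ζ) = lam) ↔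
    (∀ α : ∀ j, ZMod (n j), α ≠ 0 → (∀ j, j ∉ I → α j = 0) → c α = 0) := by
  have hcoeff (α : ∀ j, ZMod (n j)) (hα : ∀ j ∉ I, α j = 0) :
      c α = 0 ↔ piFourierCoeff (fun η ↦ ((projCount I R η : ℕ) : ℂ)) (I.restrict α) = 0 := by
    have hN : (1 / ∏ j, (n j : ℂ)) ≠ 0 :=
      one_div_ne_zero (prod_ne_zero_iff.mpr fun j _ ↦ NeZero.ne _)
    have hR : (fun η ↦ ((projCount I R η : ℕ) : ℂ)) = projCount I (fun ζ ↦ (R ζ : ℂ)) :=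
      funext fun η ↦ Nat.cast_sum _ _
    rw [hc, Xmon_eq_piStdAddChar, hR, piFourierCoeff_projCount I hα, mul_eq_zero,
      or_iff_right hN, piFourierCoeff]
  change (∃ lam : ℕ, 0 < lam ∧ ∀ η, projCount I R η = lam) ↔ _
  have hconst := forall_eq_apply_zero_iff_piFourierCoeff_eq_zero
    fun η ↦ ((projCount I R η : ℕ) : ℂ)
  simp only [Nat.cast_inj] at hconst
  rw [exists_pos_projCount_eq_iff I hF, hconst]
  constructor
  · intro h α hα hsupp
    exact (hcoeff α hsupp).mpr (h _ ((restrict_eq_zero_iff I hsupp).not.mpr hα))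
  · intro h β hβ
    obtain ⟨α, hsupp, rfl⟩ := exists_restrict_eq I β
    exact (hcoeff α hsupp).mp (h α (fun h0 ↦ hβ (h0 ▸ rfl)) hsupp)

/-- A fraction factorially projects onto the `I`-factors (the projection is a multiple
full factorial with constant positive multiplicity) if and only if `c_α = 0` for every
nonzero `α` supported on `I`. -/
theorem stmt_15 (m : ℕ) (n : Fin m → ℕ) (hn : ∀ j, 1 ≤ n j) [∀ j, NeZero (n j)]
    (I : Finset (Fin m)) (R : (∀ j, ZMod (n j)) → ℕ) (hF : 0 < ∑ ζ, R ζ)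
    (c : (∀ j, ZMod (n j)) → ℂ)
    (hc : ∀ α, c α = (1 / ∏ j, (n j : ℂ)) *
      ∑ ζ, (R ζ : ℂ) * (starRingEnd ℂ) (Xmon n α ζ)) :
    (∃ lam : ℕ, 0 < lam ∧ ∀ η : ∀ j : I, ZMod (n j.1),
        (∑ ζ ∈ Finset.univ.filter
          (fun ζ : ∀ j, ZMod (n j) => (fun j : I => ζ j.1) = η), R ζ) = lam) ↔
    (∀ α : ∀ j, ZMod (n j), α ≠ 0 → (∀ j, j ∉ I → α j = 0) → c α = 0) :=
  stmt_15_general m n I R hF c hc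
end

section
/- A fraction F is an orthogonal array of strength t (i.e., it factorially projects onto every set of t factors) if and only if all coefficients c_α of its counting function with 1 ≤ ‖α‖_0 ≤ t are zero. -/
open Finset

theorem Finset.exists_card_eq_superset_iff {ι : Type*} [Fintype ι] {s : Finset ι} {t : ℕ}
    (ht : t ≤ Fintype.card ι) : (∃ I : Finset ι, #I = t ∧ s ⊆ I) ↔ #s ≤ t :=
  ⟨fun ⟨_, hI, hsI⟩ => hI ▸ card_le_card hsI,
    fun hs => (exists_superset_card_eq hs ht).imp fun _ h => h.symm⟩

section Word

variable {m : ℕ} {n : Fin m → ℕ}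

theorem one_le_wt_iff {α : ∀ j, ZMod (n j)} : 1 ≤ wt n α ↔ α ≠ 0 := by
  simp [wt, Nat.one_le_iff_ne_zero, Function.ne_iff, filter_eq_empty_iff]

theorem filter_ne_zero_subset_iff {α : ∀ j, ZMod (n j)} {I : Finset (Fin m)} :
    (univ.filter fun j => α j ≠ 0) ⊆ I ↔ ∀ j, j ∉ I → α j = 0 := by
  simp only [subset_iff, mem_filter, mem_univ, true_and]
  exact forall_congr' fun _ => not_imp_comm

end Word

/- A nonzero `α` is supported on some set of exactly `t ≤ m` factors iff its word length,
the size of its support, is at most `t`. -/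
theorem stmt_16_general (m : ℕ) (n : Fin m → ℕ)
    (c : (∀ j, ZMod (n j)) → ℂ)
    (t : ℕ) (ht : t ≤ m)
    (projects : Finset (Fin m) → Prop)
    (hproj : ∀ I, projects I ↔
      ∀ α : ∀ j, ZMod (n j), α ≠ 0 → (∀ j, j ∉ I → α j = 0) → c α = 0) :
    (∀ I : Finset (Fin m), I.card = t → projects I) ↔
      (∀ α, 1 ≤ wt n α → wt n α ≤ t → c α = 0) := by
  have ht' : t ≤ Fintype.card (Fin m) := by simpa using ht
  simp_rw [hproj, ← filter_ne_zero_subset_iff, one_le_wt_iff, wt,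
    ← exists_card_eq_superset_iff ht', forall_exists_index, and_imp]
  exact ⟨fun h α hα I hI => h I hI α hα, fun h I hI α hα => h α hα I hI⟩

/-- A fraction is an orthogonal array of strength `t` (it factorially projects onto
every set of `t` factors) if and only if all coefficients `c_α` with
`1 ≤ ‖α‖₀ ≤ t` vanish.  Projecting onto `I` is assumed (as in the context) to be
equivalent to the vanishing of `c_α` for all nonzero `α` supported on `I`. -/
theorem stmt_16 (m : ℕ) (n : Fin m → ℕ) (hn : ∀ j, 1 ≤ n j) [∀ j, NeZero (n j)]
    (R : (∀ j, ZMod (n j)) → ℕ) (c : (∀ j, ZMod (n j)) → ℂ)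
    (hc : ∀ α, c α = (1 / ∏ j, (n j : ℂ)) *
      ∑ ζ, (R ζ : ℂ) * (starRingEnd ℂ) (Xmon n α ζ))
    (t : ℕ) (ht : t ≤ m)
    (projects : Finset (Fin m) → Prop)
    (hproj : ∀ I, projects I ↔
      ∀ α : ∀ j, ZMod (n j), α ≠ 0 → (∀ j, j ∉ I → α j = 0) → c α = 0) :
    (∀ I : Finset (Fin m), I.card = t → projects I) ↔
      (∀ α, 1 ≤ wt n α → wt n α ≤ t → c α = 0) :=
  stmt_16_general m n c t ht projects hproj
end
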